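/- arXiv:1905.04233 — 5 statements merged into one kernel-verified Lean document; each statement's English description precedes it below -/
import Mathlib

section
/- Let F be a convex class of probability distributions on a measurable space O, let A be a set, and let T : F → A be a functional elicitable via a strictly F-consistent scoring function S (i.e., for all x in A and F in F, the expected score of x under F is at least that of T(F), with equality only if x = T(F)). If F₀, F₁ ∈ F satisfy T(F₀) = T(F₁) = t and λF₁ + (1−λ)F₀ ∈ F for some λ ∈ (0,1), then T(λF₁ + (1−λ)F₀) = t. -/
open MeasureTheory

/-- The mixture `l • μ + (1-l) • ν` of two measures. -/
noncomputable def mix {O : Type*} [MeasurableSpace O] (μ ν : Measure O) (l : ℝ) : Measure O :=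
  ENNReal.ofReal l • μ + ENNReal.ofReal (1 - l) • ν

/-- `S` is a strictly `𝓕`-consistent scoring function for the functional `T`. -/
def StrictlyConsistent {O A : Type*} [MeasurableSpace O]
    (𝓕 : Set (Measure O)) (T : Measure O → A) (S : A → O → ℝ) : Prop :=
  (∀ x, ∀ F ∈ 𝓕, Integrable (S x) F) ∧
  (∀ x, ∀ F ∈ 𝓕, ∫ y, S (T F) y ∂F ≤ ∫ y, S x y ∂F) ∧
  (∀ x, ∀ F ∈ 𝓕, ∫ y, S x y ∂F = ∫ y, S (T F) y ∂F → x = T F)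

lemma mix_integral {O : Type*} [MeasurableSpace O] (μ ν : Measure O) (l : ℝ)
    (hl : l ∈ Set.Ioo (0:ℝ) 1) (f : O → ℝ)
    (hf : Integrable f (mix μ ν l)) :
    ∫ y, f y ∂(mix μ ν l) = l * ∫ y, f y ∂μ + (1 - l) * ∫ y, f y ∂ν := by
  obtain ⟨hl0, hl1⟩ := hl
  unfold mix at *
  have h1 : Integrable f (ENNReal.ofReal l • μ) := (integrable_add_measure.mp hf).1
  have h2 : Integrable f (ENNReal.ofReal (1 - l) • ν) := (integrable_add_measure.mp hf).2
  rw [integral_add_measure h1 h2, integral_smul_measure, integral_smul_measure,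
    ENNReal.toReal_ofReal hl0.le, ENNReal.toReal_ofReal (by linarith), smul_eq_mul, smul_eq_mul]

/-- Convexity of level sets of elicitable functionals (Osband). -/
theorem convexity_of_level_sets {O A : Type*} [MeasurableSpace O]
    (𝓕 : Set (Measure O)) (hprob : ∀ F ∈ 𝓕, IsProbabilityMeasure F)
    (hconv : ∀ F ∈ 𝓕, ∀ G ∈ 𝓕, ∀ l ∈ Set.Ioo (0:ℝ) 1, mix F G l ∈ 𝓕)
    (T : Measure O → A) (S : A → O → ℝ)
    (hS : StrictlyConsistent 𝓕 T S)
    (F₀ F₁ : Measure O) (h₀ : F₀ ∈ 𝓕) (h₁ : F₁ ∈ 𝓕)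
    (t : A) (ht₀ : T F₀ = t) (ht₁ : T F₁ = t)
    (l : ℝ) (hl : l ∈ Set.Ioo (0:ℝ) 1) (hmem : mix F₁ F₀ l ∈ 𝓕) :
    T (mix F₁ F₀ l) = t := by
  obtain ⟨hint, hcons, hstrict⟩ := hS
  set Fm := mix F₁ F₀ l with hFm
  set s := T Fm with hs
  -- expected score of t under Fm ≤ expected score of s under Fm, componentwise
  have e1 : ∫ y, S t y ∂Fm = l * ∫ y, S t y ∂F₁ + (1 - l) * ∫ y, S t y ∂F₀ :=
    mix_integral _ _ _ hl _ (hint t Fm hmem)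
  have e2 : ∫ y, S s y ∂Fm = l * ∫ y, S s y ∂F₁ + (1 - l) * ∫ y, S s y ∂F₀ :=
    mix_integral _ _ _ hl _ (hint s Fm hmem)
  have hA : ∫ y, S t y ∂F₁ ≤ ∫ y, S s y ∂F₁ := by
    have := hcons s F₁ h₁; rwa [ht₁] at this
  have hB : ∫ y, S t y ∂F₀ ≤ ∫ y, S s y ∂F₀ := by
    have := hcons s F₀ h₀; rwa [ht₀] at this
  have hle : ∫ y, S t y ∂Fm ≤ ∫ y, S s y ∂Fm := by
    rw [e1, e2]
    have hl0 := hl.1; have hl1 := hl.2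
    nlinarith
  have hge : ∫ y, S s y ∂Fm ≤ ∫ y, S t y ∂Fm := hcons t Fm hmem
  exact (hstrict t Fm hmem (le_antisymm hle hge)).symm
end

section
/- Let F be a class of probability distributions and T : F → A a functional. Suppose there exist F₀, F₁ ∈ F with T(F₀) ≠ T(F₁) such that for all λ ∈ (0,1), the mixture Fλ = λF₁ + (1−λ)F₀ lies in F and T(Fλ) ∈ {T(F₀), T(F₁)}. Then there exists no strictly F-consistent scoring function for T, i.e., T is not elicitable. -/
open MeasureTheory

lemma integral_mix {O : Type*} [MeasurableSpace O] (μ ν : Measure O) (l : ℝ)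
    (hl0 : 0 ≤ l) (hl1 : l ≤ 1) (f : O → ℝ) (hμ : Integrable f μ) (hν : Integrable f ν) :
    ∫ y, f y ∂(mix μ ν l) = l * ∫ y, f y ∂μ + (1 - l) * ∫ y, f y ∂ν := by
  unfold mix
  rw [integral_add_measure (hμ.smul_measure ENNReal.ofReal_ne_top)
    (hν.smul_measure ENNReal.ofReal_ne_top), integral_smul_measure, integral_smul_measure,
    ENNReal.toReal_ofReal hl0, ENNReal.toReal_ofReal (by linarith)]
  simp [smul_eq_mul]

/-- If a functional takes only the two values `T F₀ ≠ T F₁` along the whole mixture segment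
between `F₀` and `F₁`, then it is not elicitable. -/
theorem not_elicitable_of_piecewise_constant {O A : Type*} [MeasurableSpace O]
    (𝓕 : Set (Measure O)) (hprob : ∀ F ∈ 𝓕, IsProbabilityMeasure F)
    (T : Measure O → A)
    (F₀ F₁ : Measure O) (h₀ : F₀ ∈ 𝓕) (h₁ : F₁ ∈ 𝓕) (hne : T F₀ ≠ T F₁)
    (hmix : ∀ l ∈ Set.Ioo (0:ℝ) 1,
      mix F₁ F₀ l ∈ 𝓕 ∧ (T (mix F₁ F₀ l) = T F₀ ∨ T (mix F₁ F₀ l) = T F₁)) :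
    ¬ ∃ S : A → O → ℝ, StrictlyConsistent 𝓕 T S := by
  rintro ⟨S, hInt, hCons, hStrict⟩
  -- strict inequality lemma
  have hlt : ∀ x, ∀ F ∈ 𝓕, x ≠ T F → ∫ y, S (T F) y ∂F < ∫ y, S x y ∂F := by
    intro x F hF hx
    refine lt_of_le_of_ne (hCons x F hF) fun h => hx (hStrict x F hF h.symm)
  set a : ℝ := (∫ y, S (T F₀) y ∂F₁) - ∫ y, S (T F₁) y ∂F₁ with ha_def
  set b : ℝ := (∫ y, S (T F₀) y ∂F₀) - ∫ y, S (T F₁) y ∂F₀ with hb_def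
  have ha : 0 < a := sub_pos.mpr (hlt (T F₀) F₁ h₁ hne)
  have hb : b < 0 := sub_neg.mpr (hlt (T F₁) F₀ h₀ (Ne.symm hne))
  set l : ℝ := (-b) / (a - b) with hl_def
  have hab : 0 < a - b := by linarith
  have hl0 : 0 < l := div_pos (by linarith) hab
  have hl1 : l < 1 := (div_lt_one hab).mpr (by linarith)
  obtain ⟨hFl, hTl⟩ := hmix l ⟨hl0, hl1⟩
  have key : ∀ x, ∫ y, S x y ∂(mix F₁ F₀ l) =
      l * ∫ y, S x y ∂F₁ + (1 - l) * ∫ y, S x y ∂F₀ := fun x =>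
    integral_mix F₁ F₀ l hl0.le hl1.le (S x) (hInt x F₁ h₁) (hInt x F₀ h₀)
  have hg : (∫ y, S (T F₀) y ∂(mix F₁ F₀ l)) - ∫ y, S (T F₁) y ∂(mix F₁ F₀ l)
      = l * a + (1 - l) * b := by
    rw [key, key]; ring
  have hzero : l * a + (1 - l) * b = 0 := by
    rw [hl_def]; field_simp; ring
  rcases hTl with h | h
  · have := hlt (T F₁) _ hFl (h ▸ Ne.symm hne)
    rw [h] at this
    linarith
  · have := hlt (T F₀) _ hFl (h ▸ hne)
    rw [h] at this
    linarith
end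

section
/- Let F be a convex class of probability distributions and T : F → ℝ a max-functional, i.e., T(λF₁ + (1−λ)F₀) = max(T(F₀), T(F₁)) for all F₀, F₁ ∈ F and λ ∈ (0,1). If T is not constant, then T is not elicitable (no strictly F-consistent scoring function for T exists). -/
open MeasureTheory

/-- `T` is a max-functional on the convex class `𝓕`. -/
def MaxFunctional {O : Type*} [MeasurableSpace O]
    (𝓕 : Set (Measure O)) (T : Measure O → ℝ) : Prop :=
  ∀ F₀ ∈ 𝓕, ∀ F₁ ∈ 𝓕, ∀ l ∈ Set.Ioo (0:ℝ) 1, T (mix F₁ F₀ l) = max (T F₀) (T F₁)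

/-- A non-constant max-functional is not elicitable. -/
theorem max_functional_not_elicitable {O : Type*} [MeasurableSpace O]
    (𝓕 : Set (Measure O)) (hprob : ∀ F ∈ 𝓕, IsProbabilityMeasure F)
    (hconv : ∀ F ∈ 𝓕, ∀ G ∈ 𝓕, ∀ l ∈ Set.Ioo (0:ℝ) 1, mix F G l ∈ 𝓕)
    (T : Measure O → ℝ) (hmax : MaxFunctional 𝓕 T)
    (hnonconst : ∃ F ∈ 𝓕, ∃ G ∈ 𝓕, T F ≠ T G) :
    ¬ ∃ S : ℝ → O → ℝ, StrictlyConsistent 𝓕 T S := by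
  rintro ⟨S, hIntS, hcons, hstr⟩
  obtain ⟨F, hF, G, hG, hne⟩ := hnonconst
  obtain ⟨F₀, hF₀, F₁, hF₁, hlt⟩ : ∃ F₀ ∈ 𝓕, ∃ F₁ ∈ 𝓕, T F₀ < T F₁ := by
    rcases hne.lt_or_gt with h | h
    · exact ⟨F, hF, G, hG, h⟩
    · exact ⟨G, hG, F, hF, h⟩
  set t₀ := T F₀ with ht₀
  set t₁ := T F₁ with ht₁
  -- a > 0
  have ha : 0 < ∫ y, S t₀ y ∂F₁ - ∫ y, S t₁ y ∂F₁ := by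
    have h1 := hcons t₀ F₁ hF₁
    have h2 : ∫ y, S t₀ y ∂F₁ ≠ ∫ y, S t₁ y ∂F₁ := fun h =>
      hlt.ne' (hstr t₀ F₁ hF₁ h).symm
    have := lt_of_le_of_ne h1 (Ne.symm h2)
    linarith
  have hb : 0 < ∫ y, S t₁ y ∂F₀ - ∫ y, S t₀ y ∂F₀ := by
    have h1 := hcons t₁ F₀ hF₀
    have h2 : ∫ y, S t₁ y ∂F₀ ≠ ∫ y, S t₀ y ∂F₀ := fun h =>
      hlt.ne (hstr t₁ F₀ hF₀ h).symm
    have := lt_of_le_of_ne h1 (Ne.symm h2)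
    linarith
  set a := ∫ y, S t₀ y ∂F₁ - ∫ y, S t₁ y ∂F₁ with hadef
  set b := ∫ y, S t₁ y ∂F₀ - ∫ y, S t₀ y ∂F₀ with hbdef
  have hab : 0 < a + b := by linarith
  set l := b / (a + b) with hldef
  have hl0 : 0 < l := div_pos hb hab
  have hl1 : l < 1 := by
    rw [hldef, div_lt_one hab]; linarith
  have hlmem : l ∈ Set.Ioo (0:ℝ) 1 := ⟨hl0, hl1⟩
  have hM : mix F₁ F₀ l ∈ 𝓕 := hconv F₁ hF₁ F₀ hF₀ l hlmem
  set M := mix F₁ F₀ l with hMdef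
  have hTM : T M = t₁ := by
    rw [hMdef, hmax F₀ hF₀ F₁ hF₁ l hlmem, max_eq_right hlt.le]
  have hdec : ∀ x : ℝ, ∫ y, S x y ∂M = l * ∫ y, S x y ∂F₁ + (1 - l) * ∫ y, S x y ∂F₀ := by
    intro x
    have h₁ := hIntS x F₁ hF₁
    have h₀ := hIntS x F₀ hF₀
    have hne1 : ENNReal.ofReal l ≠ 0 := by
      simp [ENNReal.ofReal_eq_zero, not_le, hl0]
    have hne0 : ENNReal.ofReal (1 - l) ≠ 0 := by
      simp only [ne_eq, ENNReal.ofReal_eq_zero, not_le]; linarith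
    have hi1 : Integrable (S x) (ENNReal.ofReal l • F₁) :=
      (integrable_smul_measure hne1 ENNReal.ofReal_ne_top).2 h₁
    have hi0 : Integrable (S x) (ENNReal.ofReal (1 - l) • F₀) :=
      (integrable_smul_measure hne0 ENNReal.ofReal_ne_top).2 h₀
    rw [hMdef, mix, integral_add_measure hi1 hi0, integral_smul_measure,
      integral_smul_measure, ENNReal.toReal_ofReal hl0.le,
      ENNReal.toReal_ofReal (by linarith : (0:ℝ) ≤ 1 - l)]
    simp [smul_eq_mul]
  -- strict consistency at M with x = t₀
  have hle : ∫ y, S (T M) y ∂M ≤ ∫ y, S t₀ y ∂M := hcons t₀ M hM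
  have hne2 : ∫ y, S t₀ y ∂M ≠ ∫ y, S (T M) y ∂M := fun h => by
    have := hstr t₀ M hM h
    rw [hTM] at this
    exact hlt.ne this
  have hstrict : ∫ y, S (T M) y ∂M < ∫ y, S t₀ y ∂M := lt_of_le_of_ne hle (Ne.symm hne2)
  rw [hTM, hdec t₁, hdec t₀] at hstrict
  -- hstrict : l * I₁t₁ + (1-l)*I₀t₁ < l * I₁t₀ + (1-l)*I₀t₀
  have key : l * a = (1 - l) * b := by
    rw [hldef]; field_simp; ring
  -- expand a, b
  have : (1 - l) * b < l * a := by
    rw [hadef, hbdef]; ring_nf; ring_nf at hstrict; linarith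
  linarith [key]
end

section
/- Let F be a convex class of probability distributions and T : F → ℝ a functional taking only finitely many values. If T is not constant, then T is not elicitable. -/
open MeasureTheory

/-- A non-constant finite-valued functional is not elicitable. -/
theorem finite_valued_not_elicitable {O : Type*} [MeasurableSpace O]
    (𝓕 : Set (Measure O)) (hprob : ∀ F ∈ 𝓕, IsProbabilityMeasure F)
    (hconv : ∀ F ∈ 𝓕, ∀ G ∈ 𝓕, ∀ l ∈ Set.Ioo (0:ℝ) 1, mix F G l ∈ 𝓕)
    (T : Measure O → ℝ) (hfin : (T '' 𝓕).Finite)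
    (hnonconst : ∃ F ∈ 𝓕, ∃ G ∈ 𝓕, T F ≠ T G) :
    ¬ ∃ S : ℝ → O → ℝ, StrictlyConsistent 𝓕 T S := by
  rintro ⟨S, hInt, hCons, hStrict⟩
  obtain ⟨F, hF, G, hG, hTFG⟩ := hnonconst
  have hmix0 : mix F G 0 = G := by simp [mix]
  have hmix1 : mix F G 1 = F := by simp [mix]
  have hmem : ∀ l, 0 ≤ l → l ≤ 1 → mix F G l ∈ 𝓕 := by
    intro l h0 h1
    rcases eq_or_lt_of_le h0 with h | h
    · rw [← h, hmix0]; exact hG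
    rcases eq_or_lt_of_le h1 with h' | h'
    · rw [h', hmix1]; exact hF
    exact hconv F hF G hG l ⟨h, h'⟩
  set A : ℝ → ℝ := fun x => ∫ y, S x y ∂F with hA
  set B : ℝ → ℝ := fun x => ∫ y, S x y ∂G with hB
  have hφ : ∀ x l, 0 ≤ l → l ≤ 1 →
      ∫ y, S x y ∂(mix F G l) = l * A x + (1 - l) * B x := by
    intro x l h0 h1
    have i1 : Integrable (S x) (ENNReal.ofReal l • F) :=
      (hInt x F hF).smul_measure ENNReal.ofReal_ne_top
    have i2 : Integrable (S x) (ENNReal.ofReal (1 - l) • G) :=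
      (hInt x G hG).smul_measure ENNReal.ofReal_ne_top
    simp only [mix]
    rw [integral_add_measure i1 i2, integral_smul_measure, integral_smul_measure,
        ENNReal.toReal_ofReal h0, ENNReal.toReal_ofReal (by linarith)]
    simp [hA, hB, smul_eq_mul]
  set f : ℝ → ℝ := fun l => T (mix F G l) with hfdef
  have P : ∀ l, 0 ≤ l → l ≤ 1 → ∀ x, x ≠ f l →
      l * A (f l) + (1 - l) * B (f l) < l * A x + (1 - l) * B x := by
    intro l h0 h1 x hx
    have hm := hmem l h0 h1
    have hle := hCons x _ hm
    rw [hφ x l h0 h1, hφ _ l h0 h1] at hle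
    rcases lt_or_eq_of_le hle with h | h
    · exact h
    · exact absurd (hStrict x _ hm (by rw [hφ x l h0 h1, hφ _ l h0 h1]; exact h.symm)) hx
  have hf0 : f 0 = T G := by rw [hfdef]; simp only; rw [hmix0]
  have hf1 : f 1 = T F := by rw [hfdef]; simp only; rw [hmix1]
  set a := f 0 with ha
  set N := {l : ℝ | (0 ≤ l ∧ l ≤ 1) ∧ f l ≠ a} with hNdef
  have hN1 : (1 : ℝ) ∈ N := ⟨⟨zero_le_one, le_refl 1⟩, by rw [hf1, hf0]; exact hTFG⟩
  have hbdd : BddBelow N := ⟨0, fun x hx => hx.1.1⟩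
  have hNne : N.Nonempty := ⟨1, hN1⟩
  set c := sInf N with hc
  have hc0 : 0 ≤ c := le_csInf hNne fun x hx => hx.1.1
  have hc1 : c ≤ 1 := csInf_le hbdd hN1
  have hbelow : ∀ l, 0 ≤ l → l < c → f l = a := by
    intro l h0 hl
    by_contra hne
    exact absurd (csInf_le hbdd ⟨⟨h0, le_trans hl.le hc1⟩, hne⟩) (not_le.mpr hl)
  by_cases hca : f c = a
  · -- f c = a : use a sequence in N approaching c from above
    have hseq : ∀ n : ℕ, ∃ m', m' ∈ N ∧ m' < c + 1 / (n + 1) :=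
      fun n => exists_lt_of_csInf_lt hNne (lt_add_of_pos_right c (by positivity))
    choose m hmN hmlt using hseq
    have hmc : ∀ n, c ≤ m n := fun n => csInf_le hbdd (hmN n)
    have himg : ∀ n, f (m n) ∈ T '' 𝓕 :=
      fun n => ⟨mix F G (m n), hmem _ (hmN n).1.1 (hmN n).1.2, rfl⟩
    haveI := hfin.to_subtype
    obtain ⟨y, hy⟩ :=
      Finite.exists_infinite_fiber (fun n : ℕ => (⟨f (m n), himg n⟩ : T '' 𝓕))
    have hMinf : {n : ℕ | f (m n) = (y : ℝ)}.Infinite := by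
      have h := Set.infinite_coe_iff.mp hy
      have : (fun n : ℕ => (⟨f (m n), himg n⟩ : T '' 𝓕)) ⁻¹' {y}
          = {n : ℕ | f (m n) = (y : ℝ)} := by
        ext n; simp [Subtype.ext_iff]
      rwa [this] at h
    set b := (y : ℝ) with hbdef
    obtain ⟨n₀, hn₀⟩ := hMinf.nonempty
    have hba : b ≠ a := by rw [← hn₀]; exact (hmN n₀).2
    -- value of the affine gap at c is positive
    have hgc : c * A a + (1 - c) * B a < c * A b + (1 - c) * B b := by
      have := P c hc0 hc1 b (by rw [hca]; exact hba)
      rwa [hca] at this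
    -- at the points m n it is negative
    have hgm : ∀ n ∈ {n : ℕ | f (m n) = b},
        m n * A b + (1 - m n) * B b < m n * A a + (1 - m n) * B a := by
      intro n hn
      have hne : a ≠ f (m n) := by rw [hn]; exact hba.symm
      have := P (m n) (hmN n).1.1 (hmN n).1.2 a hne
      rwa [hn] at this
    set q : ℝ := (A b - B b) - (A a - B a) with hqdef
    -- slope is negative
    have hq : q < 0 := by
      have h1 := hgm n₀ hn₀
      have h2 := hgc
      have h3 := hmc n₀
      rcases lt_or_eq_of_le h3 with h4 | h4
      · nlinarith
      · rw [← h4] at h1; nlinarith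
    set ε : ℝ := ((c * A b + (1 - c) * B b) - (c * A a + (1 - c) * B a)) / (-q) with hεdef
    have hεpos : 0 < ε := by
      apply div_pos (by linarith) (by linarith)
    obtain ⟨n, hnM, hnlt⟩ := hMinf.exists_gt ⌈1 / ε⌉₊
    have hn1 : 1 / ((n : ℝ) + 1) < ε := by
      rw [div_lt_iff₀ (by positivity)]
      have h1 : (1 : ℝ) / ε ≤ ⌈1 / ε⌉₊ := Nat.le_ceil _
      have h2 : ((⌈1 / ε⌉₊ : ℝ)) < n := by exact_mod_cast hnlt
      have h3 : 1 / ε < (n : ℝ) + 1 := by linarith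
      calc (1 : ℝ) = ε * (1 / ε) := by field_simp
        _ < ε * ((n : ℝ) + 1) := by
            exact mul_lt_mul_of_pos_left h3 hεpos
    have hεq : ε * (-q) = (c * A b + (1 - c) * B b) - (c * A a + (1 - c) * B a) := by
      rw [hεdef]; exact div_mul_cancel₀ _ (ne_of_gt (by linarith))
    have h1 := hgm n hnM
    have h2 := hmlt n
    have h3 := hmc n
    nlinarith [mul_lt_mul_of_pos_left (lt_of_lt_of_le hn1 (le_of_lt (lt_of_le_of_lt (le_refl ε) (lt_add_of_pos_right ε hεpos)))) (neg_pos.mpr hq)]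
  · -- f c ≠ a
    set b := f c with hbdef
    have hba : b ≠ a := hca
    have hcpos : 0 < c := by
      rcases lt_or_eq_of_le hc0 with h | h
      · exact h
      · exact absurd (by rw [← h] : f c = a) hca
    have hgc : c * A b + (1 - c) * B b < c * A a + (1 - c) * B a :=
      P c hc0 hc1 a hba.symm
    have hgl : ∀ l, 0 ≤ l → l < c →
        l * A a + (1 - l) * B a < l * A b + (1 - l) * B b := by
      intro l h0 hl
      have hfa : f l = a := hbelow l h0 hl
      have := P l h0 (le_trans hl.le hc1) b (by rw [hfa]; exact hba)
      rwa [hfa] at this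
    set q : ℝ := (A b - B b) - (A a - B a) with hqdef
    have hmid := hgl (c / 2) (by linarith) (by linarith)
    have hq : q < 0 := by nlinarith
    set ε : ℝ := ((c * A a + (1 - c) * B a) - (c * A b + (1 - c) * B b)) / (-q) with hεdef
    have hεpos : 0 < ε := div_pos (by linarith) (by linarith)
    set δ : ℝ := min (c / 2) (ε / 2) with hδdef
    have hδpos : 0 < δ := lt_min (by linarith) (by linarith)
    have hδc : δ ≤ c / 2 := min_le_left _ _
    have hδε : δ ≤ ε / 2 := min_le_right _ _
    have hfl := hgl (c - δ) (by linarith) (by linarith)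
    have hεq : ε * (-q) = (c * A a + (1 - c) * B a) - (c * A b + (1 - c) * B b) := by
      rw [hεdef]; exact div_mul_cancel₀ _ (ne_of_gt (by linarith))
    nlinarith [mul_le_mul_of_nonneg_left hδε (le_of_lt (neg_pos.mpr hq))]
end

section
/- Let F be a convex class of distribution functions on ℝ and T : F → ℝ a functional such that for all F, G ∈ F: T(F) ≤ T(G) if F <ₜ G, T(F) ≥ T(G) if G <ₜ F, and T(F) = T(G) if neither F <ₜ G nor G <ₜ F. Then T is a max-functional: T(λF₁ + (1−λ)F₀) = max(T(F₀), T(F₁)) for all F₀, F₁ ∈ F and λ ∈ (0,1). -/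
open MeasureTheory Filter

/-- A (cumulative) distribution function on `ℝ`. -/
structure IsCDF (F : ℝ → ℝ) : Prop where
  mono : Monotone F
  nonneg : ∀ x, 0 ≤ F x
  le_one : ∀ x, F x ≤ 1
  tendsto_atBot : Tendsto F atBot (nhds 0)
  tendsto_atTop : Tendsto F atTop (nhds 1)

/-- The upper endpoint `sup {x | F x < 1}` of a distribution function, in `EReal`. -/
noncomputable def upEnd (F : ℝ → ℝ) : EReal :=
  sSup ((fun x : ℝ => (x : EReal)) '' {x : ℝ | F x < 1})

/-- The filter of approach towards an (extended-real) upper endpoint. -/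
noncomputable def endFilter (e : EReal) : Filter ℝ :=
  if e = ⊤ then atTop else nhdsWithin e.toReal (Set.Iio e.toReal)

/-- The strict tail order: `G` has strictly heavier tail than `F`. -/
def TailLT (F G : ℝ → ℝ) : Prop :=
  upEnd F < upEnd G ∨
    (upEnd F = upEnd G ∧
      Tendsto (fun x => (1 - F x) / (1 - G x)) (endFilter (upEnd G)) (nhds 0))

/-- `F` and `G` are tail equivalent. -/
def TailEquiv (F G : ℝ → ℝ) : Prop :=
  upEnd F = upEnd G ∧ ∃ c : ℝ, 0 < c ∧
    Tendsto (fun x => (1 - F x) / (1 - G x)) (endFilter (upEnd G)) (nhds c)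

lemma endFilter_neBot (e : EReal) : (endFilter e).NeBot := by
  rw [endFilter]; split_ifs
  · exact atTop_neBot
  · exact nhdsLT_neBot _

lemma lt_one_of_lt_upEnd {F : ℝ → ℝ} (hm : Monotone F) {x : ℝ}
    (h : (x : EReal) < upEnd F) : F x < 1 := by
  obtain ⟨b, ⟨y, hy, rfl⟩, hxy⟩ := lt_sSup_iff.mp h
  have hxy' : (x : EReal) < (y : EReal) := hxy
  exact lt_of_le_of_lt (hm (by exact_mod_cast hxy'.le)) hy

lemma eq_one_of_upEnd_lt {F : ℝ → ℝ} (h1 : ∀ x, F x ≤ 1) {x : ℝ}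
    (h : upEnd F < (x : EReal)) : F x = 1 := by
  by_contra hne
  have hmem : x ∈ {y : ℝ | F y < 1} := lt_of_le_of_ne (h1 x) hne
  exact absurd (le_sSup (Set.mem_image_of_mem _ hmem)) (not_le_of_gt h)

lemma upEnd_ne_bot {F : ℝ → ℝ} (hb : Tendsto F atBot (nhds 0)) : upEnd F ≠ ⊥ := by
  have : ∀ᶠ x : ℝ in atBot, F x < 1 := hb.eventually_lt_const one_pos
  obtain ⟨x, hx⟩ := this.exists
  have hmem : x ∈ {y : ℝ | F y < 1} := hx
  exact ((EReal.bot_lt_coe x).trans_le (le_sSup (Set.mem_image_of_mem _ hmem))).ne'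

lemma eventually_coe_lt {e : EReal} (he : e ≠ ⊥) :
    ∀ᶠ x : ℝ in endFilter e, (x : EReal) < e := by
  rw [endFilter]; split_ifs with h
  · simp [h]
  · filter_upwards [eventually_mem_nhdsWithin] with x hx
    have : e = ((e.toReal : ℝ) : EReal) := (EReal.coe_toReal h he).symm
    rw [this]; exact_mod_cast hx

lemma eventually_lt_coe {c e : EReal} (hc : c < e) :
    ∀ᶠ x : ℝ in endFilter e, c < (x : EReal) := by
  rw [endFilter]; split_ifs with h
  · obtain ⟨r, hr1, hr2⟩ := EReal.lt_iff_exists_real_btwn.mp hc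
    filter_upwards [eventually_gt_atTop r] with x hx
    exact hr1.trans (by exact_mod_cast hx)
  · have he : e ≠ ⊥ := by rintro rfl; exact not_lt_bot hc
    have hee : e = ((e.toReal : ℝ) : EReal) := (EReal.coe_toReal h he).symm
    obtain ⟨r, hr1, hr2⟩ := EReal.lt_iff_exists_real_btwn.mp hc
    have hr2' : r < e.toReal := by rw [hee] at hr2; exact_mod_cast hr2
    have : ∀ᶠ x : ℝ in nhdsWithin e.toReal (Set.Iio e.toReal), r < x :=
      eventually_nhdsWithin_of_eventually_nhds
        (eventually_gt_nhds hr2')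
    filter_upwards [this] with x hx
    exact hr1.trans (by exact_mod_cast hx)

lemma upEnd_mix {F G : ℝ → ℝ} (hF1 : ∀ x, F x ≤ 1) (hG1 : ∀ x, G x ≤ 1)
    {l : ℝ} (hl : l ∈ Set.Ioo (0:ℝ) 1) :
    upEnd (fun x => l * G x + (1 - l) * F x) = max (upEnd F) (upEnd G) := by
  have hset : {x : ℝ | l * G x + (1 - l) * F x < 1} =
      {x : ℝ | F x < 1} ∪ {x : ℝ | G x < 1} := by
    ext x
    simp only [Set.mem_setOf_eq, Set.mem_union]
    constructor
    · intro h
      by_contra hn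
      push_neg at hn
      have h1 : F x = 1 := le_antisymm (hF1 x) hn.1
      have h2 : G x = 1 := le_antisymm (hG1 x) hn.2
      rw [h1, h2] at h; linarith
    · rintro (h | h)
      · nlinarith [hG1 x, hl.1, hl.2]
      · nlinarith [hF1 x, hl.1, hl.2]
  rw [upEnd, hset, Set.image_union, sSup_union]
  rfl

lemma tailLT_asymm {F G : ℝ → ℝ} (hF : IsCDF F) (hG : IsCDF G)
    (h1 : TailLT F G) (h2 : TailLT G F) : False := by
  have hNB := endFilter_neBot (upEnd G)
  rcases h1 with h1 | ⟨e1, t1⟩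
  · rcases h2 with h2 | ⟨e2, _⟩
    · exact lt_irrefl _ (h1.trans h2)
    · exact h1.ne e2.symm
  · rcases h2 with h2 | ⟨_, t2⟩
    · exact h2.ne e1.symm
    · rw [e1] at t2
      have hprod := t1.mul t2
      rw [mul_zero] at hprod
      have hev : ∀ᶠ x : ℝ in endFilter (upEnd G),
          (1 - F x) / (1 - G x) * ((1 - G x) / (1 - F x)) = 1 := by
        filter_upwards [eventually_coe_lt (upEnd_ne_bot hG.tendsto_atBot)] with x hx
        have hGx : G x < 1 := lt_one_of_lt_upEnd hG.mono hx
        have hFx : F x < 1 := lt_one_of_lt_upEnd hF.mono (e1 ▸ hx)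
        have hG0 : (1:ℝ) - G x ≠ 0 := by linarith
        have hF0 : (1:ℝ) - F x ≠ 0 := by linarith
        field_simp
      have := hprod.congr' hev
      have h01 : (0:ℝ) = 1 := tendsto_nhds_unique this tendsto_const_nhds
      exact zero_ne_one h01

lemma key {F G : ℝ → ℝ} (hF : IsCDF F) (hG : IsCDF G) {l : ℝ}
    (hl : l ∈ Set.Ioo (0:ℝ) 1) (hle : upEnd F ≤ upEnd G) (hnot : ¬ TailLT G F) :
    ¬ TailLT (fun x => l * G x + (1 - l) * F x) G ∧
      ¬ TailLT G (fun x => l * G x + (1 - l) * F x) := by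
  set M : ℝ → ℝ := fun x => l * G x + (1 - l) * F x with hMdef
  have hMend : upEnd M = upEnd G := by
    rw [hMdef, upEnd_mix hF.le_one hG.le_one hl]; exact max_eq_right hle
  have hNB := endFilter_neBot (upEnd G)
  have hevG : ∀ᶠ x : ℝ in endFilter (upEnd G), G x < 1 := by
    filter_upwards [eventually_coe_lt (upEnd_ne_bot hG.tendsto_atBot)] with x hx
    exact lt_one_of_lt_upEnd hG.mono hx
  constructor
  · rintro (h | ⟨_, h⟩)
    · rw [hMend] at h; exact lt_irrefl _ h
    · have hge : ∀ᶠ x : ℝ in endFilter (upEnd G), l ≤ (1 - M x) / (1 - G x) := by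
        filter_upwards [hevG] with x hx
        rw [le_div_iff₀ (by linarith)]
        have := hF.le_one x
        simp only [hMdef]
        nlinarith [hl.2]
      have hlt : ∀ᶠ x : ℝ in endFilter (upEnd G), (1 - M x) / (1 - G x) < l :=
        h.eventually (eventually_lt_nhds hl.1)
      obtain ⟨x, h1, h2⟩ := (hge.and hlt).exists
      linarith
  · rintro (h | ⟨_, h⟩)
    · rw [hMend] at h; exact lt_irrefl _ h
    · rw [hMend] at h
      rcases lt_or_eq_of_le hle with hlt | heq
      · have hevF : ∀ᶠ x : ℝ in endFilter (upEnd G), F x = 1 := by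
          filter_upwards [eventually_lt_coe hlt] with x hx
          exact eq_one_of_upEnd_lt hF.le_one hx
        have hconst : ∀ᶠ x : ℝ in endFilter (upEnd G),
            (1 - G x) / (1 - M x) = l⁻¹ := by
          filter_upwards [hevG, hevF] with x hGx hFx
          have hM1 : 1 - M x = l * (1 - G x) := by simp only [hMdef]; rw [hFx]; ring
          rw [hM1]
          have hG0 : (1:ℝ) - G x ≠ 0 := by linarith
          rw [mul_comm, div_mul_eq_div_div, div_self hG0, one_div]
        have hten := h.congr' hconst
        exact inv_ne_zero (ne_of_gt hl.1)
          (tendsto_nhds_unique hten tendsto_const_nhds).symm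
      · have hevF : ∀ᶠ x : ℝ in endFilter (upEnd G), F x < 1 := by
          filter_upwards [eventually_coe_lt (upEnd_ne_bot hG.tendsto_atBot)] with x hx
          exact lt_one_of_lt_upEnd hF.mono (by rw [heq]; exact hx)
        have hl1 : (0:ℝ) < 1 - l := by linarith [hl.2]
        have hevM : ∀ᶠ x : ℝ in endFilter (upEnd G), 0 < 1 - M x := by
          filter_upwards [hevG, hevF] with x h1 h2
          simp only [hMdef]
          nlinarith [hl.1]
        have hseq : ∀ᶠ x : ℝ in endFilter (upEnd G),
            (1 - l * ((1 - G x) / (1 - M x))) / (1 - l) = (1 - F x) / (1 - M x) := by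
          filter_upwards [hevM] with x hx
          have hM0 : (1:ℝ) - M x ≠ 0 := ne_of_gt hx
          have hFx : 1 - F x = ((1 - M x) - l * (1 - G x)) / (1 - l) := by
            simp only [hMdef]
            field_simp
            ring
          have hrw : 1 - l * ((1 - G x) / (1 - M x))
              = (1 - M x - l * (1 - G x)) / (1 - M x) := by
            field_simp
          rw [hFx, hrw, div_div, div_div, mul_comm (1 - M x)]
        have hsten : Tendsto (fun x => (1 - F x) / (1 - M x)) (endFilter (upEnd G))
            (nhds ((1 - l * 0) / (1 - l))) :=
          (((tendsto_const_nhds.sub (h.const_mul l)).div_const (1 - l)).congr' hseq)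
        have hvne : (1 - l * 0) / (1 - l) ≠ 0 := by
          rw [mul_zero, sub_zero]
          positivity
        have hratio : ∀ᶠ x : ℝ in endFilter (upEnd G),
            ((1 - G x) / (1 - M x)) / ((1 - F x) / (1 - M x))
              = (1 - G x) / (1 - F x) := by
          filter_upwards [hevM, hevF] with x h1 h2
          have hM0 : (1:ℝ) - M x ≠ 0 := ne_of_gt h1
          have hF0 : (1:ℝ) - F x ≠ 0 := by linarith
          field_simp
        have htend : Tendsto (fun x => (1 - G x) / (1 - F x)) (endFilter (upEnd G))
            (nhds 0) := by
          have := (h.div hsten hvne).congr' hratio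
          simpa using this
        exact hnot (Or.inr ⟨heq.symm, by rw [heq]; exact htend⟩)

/-- A functional on a convex class of distribution functions that respects
the tail order `<ₜ` is a max-functional. -/
theorem tail_ordering_is_max_functional
    (𝓕 : Set (ℝ → ℝ)) (hcdf : ∀ F ∈ 𝓕, IsCDF F)
    (hconv : ∀ F₀ ∈ 𝓕, ∀ F₁ ∈ 𝓕, ∀ l ∈ Set.Ioo (0:ℝ) 1,
      (fun x => l * F₁ x + (1 - l) * F₀ x) ∈ 𝓕)
    (T : (ℝ → ℝ) → ℝ)
    (hord : ∀ F ∈ 𝓕, ∀ G ∈ 𝓕,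
      (TailLT F G → T F ≤ T G) ∧ (TailLT G F → T G ≤ T F) ∧
      (¬ TailLT F G → ¬ TailLT G F → T F = T G)) :
    ∀ F₀ ∈ 𝓕, ∀ F₁ ∈ 𝓕, ∀ l ∈ Set.Ioo (0:ℝ) 1,
      T (fun x => l * F₁ x + (1 - l) * F₀ x) = max (T F₀) (T F₁) := by
  intro F₀ h0 F₁ h1 l hl
  have hcdf0 := hcdf F₀ h0
  have hcdf1 := hcdf F₁ h1
  have hM := hconv F₀ h0 F₁ h1 l hl
  by_cases h01 : TailLT F₀ F₁
  · have h10 : ¬ TailLT F₁ F₀ := fun h => tailLT_asymm hcdf0 hcdf1 h01 h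
    have hle : upEnd F₀ ≤ upEnd F₁ := h01.elim le_of_lt (fun h => le_of_eq h.1)
    obtain ⟨k1, k2⟩ := key hcdf0 hcdf1 hl hle h10
    have hT := (hord _ hM F₁ h1).2.2 k1 k2
    rw [hT, max_eq_right ((hord F₀ h0 F₁ h1).1 h01)]
  · by_cases h10 : TailLT F₁ F₀
    · have hfun : (fun x => l * F₁ x + (1 - l) * F₀ x)
          = (fun x => (1 - l) * F₀ x + (1 - (1 - l)) * F₁ x) := funext fun x => by ring
      have hle : upEnd F₁ ≤ upEnd F₀ := h10.elim le_of_lt (fun h => le_of_eq h.1)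
      have hl' : (1 - l) ∈ Set.Ioo (0:ℝ) 1 := ⟨by linarith [hl.2], by linarith [hl.1]⟩
      obtain ⟨k1, k2⟩ := key hcdf1 hcdf0 hl' hle h01
      rw [hfun]
      have hM' : (fun x => (1 - l) * F₀ x + (1 - (1 - l)) * F₁ x) ∈ 𝓕 := hfun ▸ hM
      have hT := (hord _ hM' F₀ h0).2.2 k1 k2
      rw [hT, max_eq_left ((hord F₁ h1 F₀ h0).1 h10)]
    · have hle : upEnd F₀ ≤ upEnd F₁ := le_of_not_gt (fun h => h10 (Or.inl h))
      obtain ⟨k1, k2⟩ := key hcdf0 hcdf1 hl hle h10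
      have hT := (hord _ hM F₁ h1).2.2 k1 k2
      have hEq := (hord F₀ h0 F₁ h1).2.2 h01 h10
      rw [hT, hEq, max_self]
end
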